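/- Let (H,α) be a monoidal Hom-Hopf algebra with Hom-Hopf automorphisms φ,ϕ. For a right (H,α)-Hom-module and right (H,α)-Hom-comodule (M,μ), the (φ,ϕ)-Hom-Yetter-Drinfeld compatibility condition ρ^M(mh)=m_(0)α(h_21)⊗ϕ(S(h_1))(α^{-1}(m_(1))φ(h_22)) is equivalent to m_(0)α^{-1}(h_1)⊗m_(1)φ(α^{-1}(h_2))=(mh_2)_(0)⊗α^{-1}(ϕ(h_1)(mh_2)_(1)) for all m∈M, h∈H. -/
import Mathlib


open TensorProduct

namespace HomPaper

variable {k : Type*} [CommRing k]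
variable {A C V : Type*}
variable [AddCommGroup A] [Module k A] [AddCommGroup C] [Module k C]
variable [AddCommGroup V] [Module k V]

/-- Monoidal Hom-algebra axioms. -/
def IsHomAlgebra (α : A ≃ₗ[k] A) (mul : A →ₗ[k] A →ₗ[k] A) (one : A) : Prop :=
  (∀ a b c, mul (α a) (mul b c) = mul (mul a b) (α c)) ∧
  (∀ a, mul a one = α a) ∧ (∀ a, mul one a = α a) ∧
  (∀ a b, α (mul a b) = mul (α a) (α b)) ∧ α one = one

/-- Monoidal Hom-coalgebra axioms. -/
def IsHomCoalgebra (γ : C ≃ₗ[k] C) (Δ : C →ₗ[k] C ⊗[k] C) (ε : C →ₗ[k] k) : Prop :=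
  (∀ c, TensorProduct.map γ.symm.toLinearMap Δ (Δ c)
      = TensorProduct.assoc k C C C (TensorProduct.map Δ γ.symm.toLinearMap (Δ c))) ∧
  (∀ c, TensorProduct.lid k C (TensorProduct.map ε LinearMap.id (Δ c)) = γ.symm c) ∧
  (∀ c, TensorProduct.rid k C (TensorProduct.map LinearMap.id ε (Δ c)) = γ.symm c) ∧
  (∀ c, Δ (γ c) = TensorProduct.map γ.toLinearMap γ.toLinearMap (Δ c)) ∧
  (∀ c, ε (γ c) = ε c)

/-- Hom-entwining structure axioms for ψ : C ⊗ A → A ⊗ C, ψ(c⊗a) = a_κ ⊗ c^κ. -/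
def IsHomEntwining (α : A ≃ₗ[k] A) (γ : C ≃ₗ[k] C) (mul : A →ₗ[k] A →ₗ[k] A) (one : A)
    (Δ : C →ₗ[k] C ⊗[k] C) (ε : C →ₗ[k] k) (ψ : C ⊗[k] A →ₗ[k] A ⊗[k] C) : Prop :=
  -- (aa')_κ ⊗ γ(c)^κ = a_κ a'_λ ⊗ γ(c^{κλ})
  (∀ c a a', ψ (γ c ⊗ₜ mul a a')
      = TensorProduct.map (TensorProduct.lift mul) γ.toLinearMap
          ((TensorProduct.assoc k A A C).symm
            (TensorProduct.map LinearMap.id ψ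
              (TensorProduct.assoc k A C A (ψ (c ⊗ₜ a) ⊗ₜ a'))))) ∧
  -- α⁻¹(a_κ) ⊗ c^κ₁ ⊗ c^κ₂ = α⁻¹(a)_{κλ} ⊗ c₁^λ ⊗ c₂^κ
  (∀ c a, TensorProduct.map α.symm.toLinearMap Δ (ψ (c ⊗ₜ a))
      = TensorProduct.assoc k A C C
          (TensorProduct.map ψ LinearMap.id
            ((TensorProduct.assoc k C A C).symm
              (TensorProduct.map LinearMap.id ψ
                (TensorProduct.assoc k C C A (Δ c ⊗ₜ α.symm a)))))) ∧
  -- 1_κ ⊗ c^κ = 1 ⊗ c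
  (∀ c, ψ (c ⊗ₜ one) = one ⊗ₜ c) ∧
  -- a_κ ε(c^κ) = a ε(c)
  (∀ c a, TensorProduct.rid k A (TensorProduct.map LinearMap.id ε (ψ (c ⊗ₜ a))) = ε c • a) ∧
  -- ψ is a morphism in the Hom-category
  (∀ c a, ψ (γ c ⊗ₜ α a) = TensorProduct.map α.toLinearMap γ.toLinearMap (ψ (c ⊗ₜ a)))

/-- The relations defining `V ⊗_A V` (on top of base relations `R₀` defining the coring
module as a quotient of `V`). -/
def corRel (R₀ : Submodule k V) (χ : V ≃ₗ[k] V)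
    (lact : A →ₗ[k] V →ₗ[k] V) (ract : V →ₗ[k] A →ₗ[k] V) : Submodule k (V ⊗[k] V) :=
  Submodule.span k
    ({x | ∃ v a w, x = ract v a ⊗ₜ w - χ v ⊗ₜ lact a (χ.symm w)} ∪
     {x | ∃ r w, r ∈ R₀ ∧ (x = r ⊗ₜ w ∨ x = w ⊗ₜ r)})

/-- Induced left A-action on `V ⊗_A V` (on representatives). -/
noncomputable def lact2 (α : A ≃ₗ[k] A) (χ : V ≃ₗ[k] V) (lact : A →ₗ[k] V →ₗ[k] V) (a : A) :
    V ⊗[k] V →ₗ[k] V ⊗[k] V :=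
  TensorProduct.map (lact (α.symm a)) χ.toLinearMap

/-- Induced right A-action on `V ⊗_A V` (on representatives). -/
noncomputable def ract2 (α : A ≃ₗ[k] A) (χ : V ≃ₗ[k] V) (ract : V →ₗ[k] A →ₗ[k] V) (a : A) :
    V ⊗[k] V →ₗ[k] V ⊗[k] V :=
  TensorProduct.map χ.toLinearMap (ract.flip (α.symm a))

/-- The relations defining `V ⊗_A (V ⊗_A V)`. -/
def corRel3 (R₀ : Submodule k V) (α : A ≃ₗ[k] A) (χ : V ≃ₗ[k] V)
    (lact : A →ₗ[k] V →ₗ[k] V) (ract : V →ₗ[k] A →ₗ[k] V) :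
    Submodule k (V ⊗[k] (V ⊗[k] V)) :=
  Submodule.span k
    ({x | ∃ v a w, x = ract v a ⊗ₜ w - χ v ⊗ₜ lact2 α χ lact a w} ∪
     {x | ∃ v w, w ∈ corRel R₀ χ lact ract ∧ x = v ⊗ₜ w} ∪
     {x | ∃ r w, r ∈ R₀ ∧ x = r ⊗ₜ w})

/-- `(V,χ)` (modulo the relations `R₀`) together with the A-bimodule structure
`lact`, `ract`, comultiplication representative `Δ` and counit `ε` is an
`(A,α)`-Hom-coring: all axioms are stated on representatives, under the quotient
projections by `R₀` resp. the tensor-relation submodules. -/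
def IsHomCoring (α : A ≃ₗ[k] A) (mul : A →ₗ[k] A →ₗ[k] A) (one : A)
    (χ : V ≃ₗ[k] V) (lact : A →ₗ[k] V →ₗ[k] V) (ract : V →ₗ[k] A →ₗ[k] V)
    (R₀ : Submodule k V) (Δ : V →ₗ[k] V ⊗[k] V) (ε : V →ₗ[k] A) : Prop :=
  -- (V,χ) is an (A,α)-Hom-bimodule
  (∀ a b v, Submodule.Quotient.mk (p := R₀) (lact (mul a b) (χ v))
      = Submodule.Quotient.mk (p := R₀) (lact (α a) (lact b v))) ∧
  (∀ v, Submodule.Quotient.mk (p := R₀) (lact one v) = Submodule.Quotient.mk (p := R₀) (χ v)) ∧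
  (∀ v a b, Submodule.Quotient.mk (p := R₀) (ract (χ v) (mul a b))
      = Submodule.Quotient.mk (p := R₀) (ract (ract v a) (α b))) ∧
  (∀ v, Submodule.Quotient.mk (p := R₀) (ract v one) = Submodule.Quotient.mk (p := R₀) (χ v)) ∧
  (∀ a v b, Submodule.Quotient.mk (p := R₀) (ract (lact a v) (α b))
      = Submodule.Quotient.mk (p := R₀) (lact (α a) (ract v b))) ∧
  (∀ a v, Submodule.Quotient.mk (p := R₀) (χ (lact a v))
      = Submodule.Quotient.mk (p := R₀) (lact (α a) (χ v))) ∧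
  (∀ v a, Submodule.Quotient.mk (p := R₀) (χ (ract v a))
      = Submodule.Quotient.mk (p := R₀) (ract (χ v) (α a))) ∧
  (∀ r ∈ R₀, χ r ∈ R₀) ∧
  -- Δ and ε are well defined on the quotient by R₀
  (∀ r ∈ R₀, Submodule.Quotient.mk (p := corRel R₀ χ lact ract) (Δ r) = 0) ∧
  (∀ r ∈ R₀, ε r = 0) ∧
  -- A-bilinearity of Δ
  (∀ a v, Submodule.Quotient.mk (p := corRel R₀ χ lact ract) (Δ (lact a v))
      = Submodule.Quotient.mk (p := corRel R₀ χ lact ract) (lact2 α χ lact a (Δ v))) ∧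
  (∀ v a, Submodule.Quotient.mk (p := corRel R₀ χ lact ract) (Δ (ract v a))
      = Submodule.Quotient.mk (p := corRel R₀ χ lact ract) (ract2 α χ ract a (Δ v))) ∧
  -- A-bilinearity of ε
  (∀ a v, ε (lact a v) = mul a (ε v)) ∧
  (∀ v a, ε (ract v a) = mul (ε v) a) ∧
  -- Hom-coassociativity: χ⁻¹(c₁) ⊗ Δ(c₂) = c₁₁ ⊗ (c₁₂ ⊗ χ⁻¹(c₂))
  (∀ v, Submodule.Quotient.mk (p := corRel3 R₀ α χ lact ract)
        (TensorProduct.map χ.symm.toLinearMap Δ (Δ v))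
      = Submodule.Quotient.mk (p := corRel3 R₀ α χ lact ract)
        (TensorProduct.assoc k V V V (TensorProduct.map Δ χ.symm.toLinearMap (Δ v)))) ∧
  -- counity: ε(c₁)c₂ = c = c₁ε(c₂)
  (∀ v, Submodule.Quotient.mk (p := R₀) (TensorProduct.lift (lact ∘ₗ ε) (Δ v))
      = Submodule.Quotient.mk (p := R₀) v) ∧
  (∀ v, Submodule.Quotient.mk (p := R₀) (TensorProduct.lift (ract.compl₂ ε) (Δ v))
      = Submodule.Quotient.mk (p := R₀) v) ∧
  -- compatibility with the twisting maps
  (∀ v, Submodule.Quotient.mk (p := corRel R₀ χ lact ract) (Δ (χ v))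
      = Submodule.Quotient.mk (p := corRel R₀ χ lact ract)
        (TensorProduct.map χ.toLinearMap χ.toLinearMap (Δ v))) ∧
  (∀ v, ε (χ v) = α (ε v))

end HomPaper

namespace HomPaper

variable {k A B C M : Type*} [CommRing k]
variable [AddCommGroup A] [Module k A] [AddCommGroup B] [Module k B]
variable [AddCommGroup C] [Module k C] [AddCommGroup M] [Module k M]

/-- Monoidal Hom-bialgebra axioms. -/
def IsHomBialgebra (β : B ≃ₗ[k] B) (mul : B →ₗ[k] B →ₗ[k] B) (one : B)
    (Δ : B →ₗ[k] B ⊗[k] B) (ε : B →ₗ[k] k) : Prop :=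
  IsHomAlgebra β mul one ∧ IsHomCoalgebra β Δ ε ∧
  (∀ b b', Δ (mul b b')
      = (TensorProduct.map (TensorProduct.lift mul) (TensorProduct.lift mul))
          (TensorProduct.tensorTensorTensorComm k B B B B (Δ b ⊗ₜ Δ b'))) ∧
  Δ one = one ⊗ₜ one ∧
  (∀ b b', ε (mul b b') = ε b * ε b') ∧ ε one = 1

/-- `(A,α)` is a right `(B,β)`-Hom-comodule algebra with coaction `ρ`. -/
def IsHomComoduleAlgebra (β : B ≃ₗ[k] B) (mulB : B →ₗ[k] B →ₗ[k] B)
    (ΔB : B →ₗ[k] B ⊗[k] B) (εB : B →ₗ[k] k)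
    (α : A ≃ₗ[k] A) (mulA : A →ₗ[k] A →ₗ[k] A) (oneA : A) (oneB : B)
    (ρ : A →ₗ[k] A ⊗[k] B) : Prop :=
  -- Hom-comodule axioms
  (∀ a, TensorProduct.map α.symm.toLinearMap ΔB (ρ a)
      = TensorProduct.assoc k A B B (TensorProduct.map ρ β.symm.toLinearMap (ρ a))) ∧
  (∀ a, TensorProduct.rid k A (TensorProduct.map LinearMap.id εB (ρ a)) = α.symm a) ∧
  (∀ a, ρ (α a) = TensorProduct.map α.toLinearMap β.toLinearMap (ρ a)) ∧
  -- ρ is a morphism of Hom-algebras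
  (∀ a a', ρ (mulA a a')
      = (TensorProduct.map (TensorProduct.lift mulA) (TensorProduct.lift mulB))
          (TensorProduct.tensorTensorTensorComm k A B A B (ρ a ⊗ₜ ρ a'))) ∧
  ρ oneA = oneA ⊗ₜ oneB

/-- `(C,γ)` is a right `(B,β)`-Hom-module coalgebra with action `act`. -/
def IsHomModuleCoalgebra (β : B ≃ₗ[k] B) (mulB : B →ₗ[k] B →ₗ[k] B) (oneB : B)
    (ΔB : B →ₗ[k] B ⊗[k] B) (εB : B →ₗ[k] k)
    (γ : C ≃ₗ[k] C) (ΔC : C →ₗ[k] C ⊗[k] C) (εC : C →ₗ[k] k)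
    (act : C →ₗ[k] B →ₗ[k] C) : Prop :=
  -- Hom-module axioms
  (∀ c b b', act (γ c) (mulB b b') = act (act c b) (β b')) ∧
  (∀ c, act c oneB = γ c) ∧
  (∀ c b, γ (act c b) = act (γ c) (β b)) ∧
  -- the action is a morphism of Hom-coalgebras
  (∀ c b, ΔC (act c b)
      = (TensorProduct.map (TensorProduct.lift act) (TensorProduct.lift act))
          (TensorProduct.tensorTensorTensorComm k C C B B (ΔC c ⊗ₜ ΔB b))) ∧
  (∀ c b, εC (act c b) = εC c * εB b)

/-- The entwining map of a Hom-Doi-Koppinen datum: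
`ψ(c⊗a) = α(a₍₀₎) ⊗ γ⁻¹(c)·a₍₁₎`. -/
noncomputable def dkEntwining (α : A ≃ₗ[k] A) (γ : C ≃ₗ[k] C)
    (ρA : A →ₗ[k] A ⊗[k] B) (actC : C →ₗ[k] B →ₗ[k] C) :
    C ⊗[k] A →ₗ[k] A ⊗[k] C :=
  (TensorProduct.map α.toLinearMap
      ((TensorProduct.lift actC) ∘ₗ (TensorProduct.map γ.symm.toLinearMap LinearMap.id))) ∘ₗ
    (TensorProduct.leftComm k C A B).toLinearMap ∘ₗ
      (TensorProduct.map LinearMap.id ρA)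
end HomPaper
namespace HomPaper

/-- Monoidal Hom-Hopf algebra axioms: a monoidal Hom-bialgebra with an antipode. -/
def IsHomHopfAlgebra {k H : Type*} [CommRing k] [AddCommGroup H] [Module k H]
    (α : H ≃ₗ[k] H) (mul : H →ₗ[k] H →ₗ[k] H) (one : H)
    (Δ : H →ₗ[k] H ⊗[k] H) (ε : H →ₗ[k] k) (S : H →ₗ[k] H) : Prop :=
  IsHomBialgebra α mul one Δ ε ∧
  (∀ h, S (α h) = α (S h)) ∧
  (∀ h, TensorProduct.lift mul (TensorProduct.map S LinearMap.id (Δ h)) = ε h • one) ∧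
  (∀ h, TensorProduct.lift mul (TensorProduct.map LinearMap.id S (Δ h)) = ε h • one)

section OpTensor

variable {k H : Type*} [CommRing k] [AddCommGroup H] [Module k H]

/-- The multiplication of `H^op ⊗ H`: `(h⊗k)(h'⊗k') = h'h ⊗ kk'`. -/
noncomputable def opTensorMul (mul : H →ₗ[k] H →ₗ[k] H) :
    (H ⊗[k] H) →ₗ[k] (H ⊗[k] H) →ₗ[k] H ⊗[k] H :=
  TensorProduct.curry
    ((TensorProduct.map (TensorProduct.lift mul.flip) (TensorProduct.lift mul)) ∘ₗ
      (TensorProduct.tensorTensorTensorComm k H H H H).toLinearMap)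

/-- The comultiplication of `H^op ⊗ H`: `(h⊗k) ↦ (h₁⊗k₁) ⊗ (h₂⊗k₂)`. -/
noncomputable def opTensorComul (Δ : H →ₗ[k] H ⊗[k] H) :
    (H ⊗[k] H) →ₗ[k] (H ⊗[k] H) ⊗[k] (H ⊗[k] H) :=
  (TensorProduct.tensorTensorTensorComm k H H H H).toLinearMap ∘ₗ
    TensorProduct.map Δ Δ

/-- The counit of `H^op ⊗ H`: `(h⊗k) ↦ ε(h)ε(k)`. -/
noncomputable def opTensorCounit (ε : H →ₗ[k] k) : (H ⊗[k] H) →ₗ[k] k :=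
  (TensorProduct.lid k k).toLinearMap ∘ₗ TensorProduct.map ε ε

end OpTensor

section YDAux
variable {k H M : Type*} [CommRing k] [AddCommGroup H] [Module k H]
  [AddCommGroup M] [Module k M]
variable (mul : H →ₗ[k] H →ₗ[k] H) (act : M →ₗ[k] H →ₗ[k] M)

/-- `m1 ⊗ (a ⊗ v) ↦ mul (ϕl (S2 a)) (mul (αi m1) (φl v))`. -/
noncomputable def auxCy (S2 αi φl ϕl : H →ₗ[k] H) : H ⊗[k] (H ⊗[k] H) →ₗ[k] H :=
  TensorProduct.lift mul ∘ₗ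
    TensorProduct.map (ϕl ∘ₗ S2) (TensorProduct.lift mul ∘ₗ TensorProduct.map αi φl) ∘ₗ
      (TensorProduct.leftComm k H H H).toLinearMap

/-- `m1 ⊗ (g ⊗ (a ⊗ v)) ↦ αi (mul (ϕl g) (auxCy (m1 ⊗ (a ⊗ v))))`. -/
noncomputable def auxCw (S2 αi φl ϕl : H →ₗ[k] H) : H ⊗[k] (H ⊗[k] (H ⊗[k] H)) →ₗ[k] H :=
  αi ∘ₗ TensorProduct.lift mul ∘ₗ
    TensorProduct.map ϕl (auxCy mul S2 αi φl ϕl) ∘ₗ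
      (TensorProduct.leftComm k H H (H ⊗[k] H)).toLinearMap

/-- `g ⊗ (a ⊗ (u ⊗ v)) ↦ Σ act m0 (αl u) ⊗ αi (mul (ϕl g) (mul (ϕl (S2 a)) (mul (αi m1) (φl v))))`
where `P = Σ m0 ⊗ m1`. -/
noncomputable def auxC1 (S2 αl αi φl ϕl : H →ₗ[k] H) (P : M ⊗[k] H) :
    H ⊗[k] (H ⊗[k] (H ⊗[k] H)) →ₗ[k] M ⊗[k] H :=
  TensorProduct.map (TensorProduct.lift act ∘ₗ TensorProduct.map LinearMap.id αl)
      (auxCw mul S2 αi φl ϕl) ∘ₗ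
    (TensorProduct.tensorTensorTensorComm k M H H (H ⊗[k] (H ⊗[k] H))).toLinearMap ∘ₗ
    TensorProduct.mk k (M ⊗[k] H) (H ⊗[k] (H ⊗[k] (H ⊗[k] H))) P ∘ₗ
    (TensorProduct.leftComm k H H (H ⊗[k] H)).toLinearMap ∘ₗ
    TensorProduct.map LinearMap.id (TensorProduct.leftComm k H H H).toLinearMap

/-- `u ⊗ v ↦ Σ act m0 u ⊗ mul m1 (φl v)` where `P = Σ m0 ⊗ m1`. -/
noncomputable def auxC2 (φl : H →ₗ[k] H) (P : M ⊗[k] H) : H ⊗[k] H →ₗ[k] M ⊗[k] H :=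
  TensorProduct.map (TensorProduct.lift act) (TensorProduct.lift mul) ∘ₗ
    (TensorProduct.tensorTensorTensorComm k M H H H).toLinearMap ∘ₗ
    TensorProduct.mk k (M ⊗[k] H) (H ⊗[k] H) P ∘ₗ
    TensorProduct.map LinearMap.id φl

/-- `g ⊗ (a ⊗ b) ↦ Σ n0 ⊗ mul (c g) (αi (mul (ϕl a) n1))` where `ρact b = Σ n0 ⊗ n1`. -/
noncomputable def auxC3 (c αi ϕl : H →ₗ[k] H) (ρact : H →ₗ[k] M ⊗[k] H) :
    H ⊗[k] (H ⊗[k] H) →ₗ[k] M ⊗[k] H :=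
  TensorProduct.map LinearMap.id (TensorProduct.lift (mul ∘ₗ c)) ∘ₗ
    (TensorProduct.leftComm k H M H).toLinearMap ∘ₗ
    TensorProduct.map LinearMap.id
      (TensorProduct.map LinearMap.id (αi ∘ₗ TensorProduct.lift mul)) ∘ₗ
    TensorProduct.map LinearMap.id (TensorProduct.leftComm k H M H).toLinearMap ∘ₗ
    TensorProduct.map LinearMap.id (TensorProduct.map ϕl ρact)

/-- `g ⊗ (a ⊗ b) ↦ Σ act m0 (αi a) ⊗ mul (c g) (mul m1 (φl (αi b)))` where `P = Σ m0 ⊗ m1`. -/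
noncomputable def auxC6 (c αi φl : H →ₗ[k] H) (P : M ⊗[k] H) :
    H ⊗[k] (H ⊗[k] H) →ₗ[k] M ⊗[k] H :=
  TensorProduct.map (TensorProduct.lift act)
      (TensorProduct.lift mul ∘ₗ TensorProduct.map LinearMap.id (TensorProduct.lift mul) ∘ₗ
        (TensorProduct.leftComm k H H H).toLinearMap) ∘ₗ
    (TensorProduct.tensorTensorTensorComm k M H H (H ⊗[k] H)).toLinearMap ∘ₗ
    TensorProduct.mk k (M ⊗[k] H) (H ⊗[k] (H ⊗[k] H)) P ∘ₗ
    TensorProduct.map αi (TensorProduct.map c (φl ∘ₗ αi)) ∘ₗ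
    (TensorProduct.leftComm k H H H).toLinearMap

lemma auxC1_tmul (S2 αl αi φl ϕl : H →ₗ[k] H) (m0 : M) (m1 g a u v : H) :
    auxC1 mul act S2 αl αi φl ϕl (m0 ⊗ₜ[k] m1) (g ⊗ₜ[k] (a ⊗ₜ[k] (u ⊗ₜ[k] v)))
      = act m0 (αl u) ⊗ₜ[k]
          αi (mul (ϕl g) (mul (ϕl (S2 a)) (mul (αi m1) (φl v)))) := by
  simp [auxC1, auxCw, auxCy]

lemma auxC2_tmul (φl : H →ₗ[k] H) (m0 : M) (m1 u v : H) :
    auxC2 mul act φl (m0 ⊗ₜ[k] m1) (u ⊗ₜ[k] v)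
      = act m0 u ⊗ₜ[k] mul m1 (φl v) := by
  simp [auxC2]

lemma auxC3_tmul (c αi ϕl : H →ₗ[k] H) (ρact : H →ₗ[k] M ⊗[k] H) (g a b : H)
    (n0 : M) (n1 : H) (hn : ρact b = n0 ⊗ₜ[k] n1) :
    auxC3 mul c αi ϕl ρact (g ⊗ₜ[k] (a ⊗ₜ[k] b))
      = n0 ⊗ₜ[k] mul (c g) (αi (mul (ϕl a) n1)) := by
  simp [auxC3, hn]

lemma auxC6_tmul (c αi φl : H →ₗ[k] H) (m0 : M) (m1 g a b : H) :
    auxC6 mul act c αi φl (m0 ⊗ₜ[k] m1) (g ⊗ₜ[k] (a ⊗ₜ[k] b))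
      = act m0 (αi a) ⊗ₜ[k] mul (c g) (mul m1 (φl (αi b))) := by
  simp [auxC6]

end YDAux

set_option maxHeartbeats 2000000 in
/-- Let `(H,α)` be a monoidal Hom-Hopf algebra with Hom-Hopf algebra
automorphisms `φ, ϕ`. For a right `(H,α)`-Hom-module and right `(H,α)`-Hom-comodule
`(M,μ)`, the `(φ,ϕ)`-Hom-Yetter-Drinfeld compatibility condition
`ρ(mh) = m₍₀₎α(h₂₁) ⊗ ϕ(S(h₁))(α⁻¹(m₍₁₎)φ(h₂₂))`
is equivalent to
`m₍₀₎α⁻¹(h₁) ⊗ m₍₁₎φ(α⁻¹(h₂)) = (mh₂)₍₀₎ ⊗ α⁻¹(ϕ(h₁)(mh₂)₍₁₎)`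
for all `m ∈ M`, `h ∈ H`. -/
theorem generalized_YD_equivalence
    {k H M : Type*} [CommRing k] [AddCommGroup H] [Module k H]
    [AddCommGroup M] [Module k M]
    (α : H ≃ₗ[k] H) (mul : H →ₗ[k] H →ₗ[k] H) (one : H)
    (Δ : H →ₗ[k] H ⊗[k] H) (ε : H →ₗ[k] k) (S : H →ₗ[k] H)
    (hH : IsHomHopfAlgebra α mul one Δ ε S)
    (φ ϕ : H ≃ₗ[k] H)
    (hφmul : ∀ g h, φ (mul g h) = mul (φ g) (φ h)) (hφone : φ one = one)
    (hφΔ : ∀ h, Δ (φ h) = TensorProduct.map φ.toLinearMap φ.toLinearMap (Δ h))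
    (hφε : ∀ h, ε (φ h) = ε h) (hφα : ∀ h, φ (α h) = α (φ h))
    (hϕmul : ∀ g h, ϕ (mul g h) = mul (ϕ g) (ϕ h)) (hϕone : ϕ one = one)
    (hϕΔ : ∀ h, Δ (ϕ h) = TensorProduct.map ϕ.toLinearMap ϕ.toLinearMap (Δ h))
    (hϕε : ∀ h, ε (ϕ h) = ε h) (hϕα : ∀ h, ϕ (α h) = α (ϕ h))
    (μ : M ≃ₗ[k] M) (act : M →ₗ[k] H →ₗ[k] M) (ρ : M →ₗ[k] M ⊗[k] H)
    -- (M,μ) is a right (H,α)-Hom-module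
    (hact1 : ∀ m g h, act (μ m) (mul g h) = act (act m g) (α h))
    (hact2 : ∀ m, act m one = μ m)
    (hact3 : ∀ m h, μ (act m h) = act (μ m) (α h))
    -- (M,μ) is a right (H,α)-Hom-comodule
    (hco1 : ∀ m, TensorProduct.map μ.symm.toLinearMap Δ (ρ m)
        = TensorProduct.assoc k M H H (TensorProduct.map ρ α.symm.toLinearMap (ρ m)))
    (hco2 : ∀ m, TensorProduct.rid k M (TensorProduct.map LinearMap.id ε (ρ m)) = μ.symm m)
    (hco3 : ∀ m, ρ (μ m) = TensorProduct.map μ.toLinearMap α.toLinearMap (ρ m)) :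
    -- (φ,ϕ)-Hom-Yetter-Drinfeld condition:
    -- ρ(mh) = m₍₀₎α(h₂₁) ⊗ ϕ(S(h₁))(α⁻¹(m₍₁₎)φ(h₂₂))
    (∀ m h, ρ (act m h)
        = (TensorProduct.map
            ((TensorProduct.lift act) ∘ₗ TensorProduct.map LinearMap.id α.toLinearMap)
            ((TensorProduct.lift mul) ∘ₗ
              TensorProduct.map (ϕ.toLinearMap ∘ₗ S)
                ((TensorProduct.lift mul) ∘ₗ
                  TensorProduct.map α.symm.toLinearMap φ.toLinearMap)))
          (TensorProduct.map LinearMap.id (TensorProduct.leftComm k H H H).toLinearMap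
            (TensorProduct.tensorTensorTensorComm k M H H (H ⊗[k] H)
              (TensorProduct.map LinearMap.id (TensorProduct.leftComm k H H H).toLinearMap
                (ρ m ⊗ₜ (TensorProduct.map LinearMap.id Δ (Δ h)))))))
    ↔
    -- equivalent condition:
    -- m₍₀₎α⁻¹(h₁) ⊗ m₍₁₎φ(α⁻¹(h₂)) = (mh₂)₍₀₎ ⊗ α⁻¹(ϕ(h₁)(mh₂)₍₁₎)
    (∀ m h,
        (TensorProduct.map (TensorProduct.lift act) (TensorProduct.lift mul))
          (TensorProduct.tensorTensorTensorComm k M H H H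
            (TensorProduct.map LinearMap.id
              (TensorProduct.map α.symm.toLinearMap (φ.toLinearMap ∘ₗ α.symm.toLinearMap))
              (ρ m ⊗ₜ Δ h)))
        = (TensorProduct.map LinearMap.id
            (α.symm.toLinearMap ∘ₗ (TensorProduct.lift mul) ∘ₗ
              TensorProduct.map ϕ.toLinearMap LinearMap.id))
            ((TensorProduct.leftComm k H M H)
              ((TensorProduct.map LinearMap.id (ρ ∘ₗ TensorProduct.lift act))
                ((TensorProduct.leftComm k M H H) (m ⊗ₜ Δ h))))) := by
  obtain ⟨⟨⟨hassoc, honer, honel, hαmul, hαone⟩, ⟨hco, hεl, hεr, hΔα, hεα⟩,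
    hΔmul, hΔone, hεmul, hεone⟩, hSα, hS1, hS2⟩ := hH
  have hαmul' : ∀ a b, α.symm (mul a b) = mul (α.symm a) (α.symm b) := by
    intro a b
    apply α.injective
    rw [hαmul]
    simp
  have hΔα' : ∀ x, Δ (α.symm x)
      = TensorProduct.map α.symm.toLinearMap α.symm.toLinearMap (Δ x) := by
    intro x
    have h0 : Δ x = TensorProduct.map α.toLinearMap α.toLinearMap (Δ (α.symm x)) := by
      have h1 := hΔα (α.symm x); rwa [α.apply_symm_apply] at h1
    rw [h0, ← LinearMap.comp_apply, ← TensorProduct.map_comp]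
    simp
  have hφα' : ∀ x, φ (α.symm x) = α.symm (φ x) := by
    intro x; apply α.injective; rw [← hφα]; simp
  have hϕα' : ∀ x, ϕ (α.symm x) = α.symm (ϕ x) := by
    intro x; apply α.injective; rw [← hϕα]; simp
  have exH : ∀ t : H ⊗[k] H, ∃ s : Finset (H × H), t = ∑ p ∈ s, p.1 ⊗ₜ[k] p.2 :=
    fun t => TensorProduct.exists_finset t
  choose rH rHs using exH
  have exM : ∀ t : M ⊗[k] H, ∃ s : Finset (M × H), t = ∑ p ∈ s, p.1 ⊗ₜ[k] p.2 :=
    fun t => TensorProduct.exists_finset t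
  choose rM rMs using exM
  have hS1sum : ∀ x, ∑ p ∈ rH (Δ x), mul (S p.1) p.2 = ε x • one := by
    intro x
    have h0 := hS1 x
    rw [rHs (Δ x)] at h0
    simpa using h0
  have hS2sum : ∀ x, ∑ p ∈ rH (Δ x), mul p.1 (S p.2) = ε x • one := by
    intro x
    have h0 := hS2 x
    rw [rHs (Δ x)] at h0
    simpa using h0
  have hεsum : ∀ x, ∑ p ∈ rH (Δ x), ε p.1 • p.2 = α.symm x := by
    intro x
    have h0 := hεl x
    rw [rHs (Δ x)] at h0
    simpa using h0
  constructor
  · intro hA m h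
    have hAsum : ∀ x : H, ρ (act m x) = ∑ l ∈ rH (Δ x), ∑ i ∈ rM (ρ m), ∑ t ∈ rH (Δ l.2),
        act i.1 (α t.1) ⊗ₜ[k] mul (ϕ (S l.1)) (mul (α.symm i.2) (φ t.2)) := by
      intro x
      conv_lhs => rw [hA m x, rMs (ρ m), rHs (Δ x)]
      simp only [map_sum, tmul_sum, sum_tmul, map_tmul, lift.tmul, LinearMap.coe_comp,
        Function.comp_apply, LinearMap.id_coe, id_eq, LinearEquiv.coe_coe, leftComm_tmul,
        tensorTensorTensorComm_tmul, assoc_tmul]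
      refine Finset.sum_congr rfl fun l _ => Finset.sum_congr rfl fun i _ => ?_
      conv_lhs => rw [rHs (Δ l.2)]
      simp only [map_sum, tmul_sum, sum_tmul, map_tmul, lift.tmul, LinearMap.coe_comp,
        Function.comp_apply, LinearMap.id_coe, id_eq, LinearEquiv.coe_coe, leftComm_tmul,
        tensorTensorTensorComm_tmul, assoc_tmul]
    conv_lhs => rw [rMs (ρ m), rHs (Δ h)]
    conv_rhs => rw [rHs (Δ h)]
    simp only [map_sum, tmul_sum, sum_tmul, map_tmul, lift.tmul, LinearMap.coe_comp,
      Function.comp_apply, LinearMap.id_coe, id_eq, LinearEquiv.coe_coe, leftComm_tmul,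
      tensorTensorTensorComm_tmul, assoc_tmul]
    have hR : ∀ j : H × H,
        (TensorProduct.map LinearMap.id
            (α.symm.toLinearMap ∘ₗ TensorProduct.lift mul ∘ₗ TensorProduct.map ϕ.toLinearMap LinearMap.id))
          ((TensorProduct.leftComm k H M H) (j.1 ⊗ₜ[k] ρ (act m j.2)))
        = ∑ l ∈ rH (Δ j.2), ∑ i ∈ rM (ρ m), ∑ t ∈ rH (Δ l.2),
            act i.1 (α t.1) ⊗ₜ[k]
              α.symm (mul (ϕ j.1) (mul (ϕ (S l.1)) (mul (α.symm i.2) (φ t.2)))) := by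
      intro j
      rw [hAsum j.2]
      simp only [map_sum, tmul_sum, sum_tmul, map_tmul, lift.tmul, LinearMap.coe_comp,
        Function.comp_apply, LinearMap.id_coe, id_eq, LinearEquiv.coe_coe, leftComm_tmul,
        tensorTensorTensorComm_tmul, assoc_tmul]
    simp only [hR]
    have hC1a : (∑ j ∈ rH (Δ h), ∑ l ∈ rH (Δ j.2), ∑ i ∈ rM (ρ m), ∑ t ∈ rH (Δ l.2),
          act i.1 (α t.1) ⊗ₜ[k]
            α.symm (mul (ϕ j.1) (mul (ϕ (S l.1)) (mul (α.symm i.2) (φ t.2)))))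
        = auxC1 mul act S α.toLinearMap α.symm.toLinearMap φ.toLinearMap ϕ.toLinearMap (ρ m)
            ((TensorProduct.map LinearMap.id (TensorProduct.map LinearMap.id Δ ∘ₗ Δ)) (Δ h)) := by
      conv_rhs => rw [rHs (Δ h)]
      rw [map_sum, map_sum]
      refine Finset.sum_congr rfl fun j _ => ?_
      simp only [map_tmul, LinearMap.id_coe, id_eq, LinearMap.coe_comp, Function.comp_apply]
      conv_rhs => rw [rHs (Δ j.2)]
      simp only [map_sum, tmul_sum, map_sum]
      refine Finset.sum_congr rfl fun l _ => ?_
      simp only [map_tmul, LinearMap.id_coe, id_eq]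
      conv_rhs => rw [rHs (Δ l.2), rMs (ρ m)]
      simp only [auxC1, auxCw, auxCy, map_sum, tmul_sum, sum_tmul, map_tmul, lift.tmul,
        LinearMap.coe_comp, Function.comp_apply, LinearMap.id_coe, id_eq, LinearEquiv.coe_coe,
        leftComm_tmul, tensorTensorTensorComm_tmul, assoc_tmul, TensorProduct.mk_apply,
        LinearMap.sum_apply]
      rw [Finset.sum_comm]
    rw [hC1a]
    have hE : (TensorProduct.map LinearMap.id (TensorProduct.map LinearMap.id Δ ∘ₗ Δ)) (Δ h)
        = (TensorProduct.map α.toLinearMap (TensorProduct.map LinearMap.id Δ))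
            ((TensorProduct.assoc k H H H) ((TensorProduct.map Δ α.symm.toLinearMap) (Δ h))) := by
      have h0 := congrArg (TensorProduct.map α.toLinearMap (TensorProduct.map LinearMap.id Δ)) (hco h)
      rw [← LinearMap.comp_apply, ← TensorProduct.map_comp] at h0
      simpa using h0
    rw [hE]
    have hC1b : auxC1 mul act S α.toLinearMap α.symm.toLinearMap φ.toLinearMap ϕ.toLinearMap (ρ m)
          ((TensorProduct.map α.toLinearMap (TensorProduct.map LinearMap.id Δ))
            ((TensorProduct.assoc k H H H) ((TensorProduct.map Δ α.symm.toLinearMap) (Δ h))))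
        = ∑ j ∈ rH (Δ h), ∑ r ∈ rH (Δ j.1), ∑ l ∈ rH (Δ j.2), ∑ i ∈ rM (ρ m),
            act i.1 l.1 ⊗ₜ[k]
              α.symm (mul (ϕ (α r.1))
                (mul (ϕ (S r.2)) (mul (α.symm i.2) (φ (α.symm l.2))))) := by
      conv_lhs => rw [rHs (Δ h)]
      simp only [map_sum]
      refine Finset.sum_congr rfl fun j _ => ?_
      simp only [map_tmul, LinearMap.id_coe, id_eq, LinearEquiv.coe_coe]
      conv_lhs => rw [rHs (Δ j.1)]
      simp only [sum_tmul, map_sum, assoc_tmul, map_tmul, LinearMap.id_coe, id_eq,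
        LinearEquiv.coe_coe]
      refine Finset.sum_congr rfl fun r _ => ?_
      conv_lhs => rw [hΔα' j.2, rHs (Δ j.2), rMs (ρ m)]
      simp only [auxC1, auxCw, auxCy, map_sum, tmul_sum, sum_tmul, map_tmul, lift.tmul,
        LinearMap.coe_comp, Function.comp_apply, LinearMap.id_coe, id_eq, LinearEquiv.coe_coe,
        leftComm_tmul, tensorTensorTensorComm_tmul, assoc_tmul, TensorProduct.mk_apply,
        LinearMap.sum_apply, LinearEquiv.apply_symm_apply]
    rw [hC1b]
    have hC1c : (∑ j ∈ rH (Δ h), ∑ r ∈ rH (Δ j.1), ∑ l ∈ rH (Δ j.2), ∑ i ∈ rM (ρ m),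
          act i.1 l.1 ⊗ₜ[k]
            α.symm (mul (ϕ (α r.1)) (mul (ϕ (S r.2)) (mul (α.symm i.2) (φ (α.symm l.2))))))
        = ∑ j ∈ rH (Δ h), ε j.1 •
            ∑ l ∈ rH (Δ j.2), ∑ i ∈ rM (ρ m), act i.1 l.1 ⊗ₜ[k] mul i.2 (φ l.2) := by
      refine Finset.sum_congr rfl fun j _ => ?_
      rw [Finset.sum_comm, Finset.smul_sum]
      refine Finset.sum_congr rfl fun l _ => ?_
      rw [Finset.sum_comm, Finset.smul_sum]
      refine Finset.sum_congr rfl fun i _ => ?_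
      have hterm : ∀ r : H × H,
          mul (ϕ (α r.1)) (mul (ϕ (S r.2)) (mul (α.symm i.2) (φ (α.symm l.2))))
            = mul (ϕ (mul r.1 (S r.2))) (α (mul (α.symm i.2) (φ (α.symm l.2)))) := by
        intro r; rw [hϕα, hassoc, hϕmul]
      simp only [hterm]
      have hpull : (∑ r ∈ rH (Δ j.1), act i.1 l.1 ⊗ₜ[k]
            α.symm (mul (ϕ (mul r.1 (S r.2))) (α (mul (α.symm i.2) (φ (α.symm l.2))))))
          = act i.1 l.1 ⊗ₜ[k]
            α.symm (mul (ϕ (∑ r ∈ rH (Δ j.1), mul r.1 (S r.2)))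
              (α (mul (α.symm i.2) (φ (α.symm l.2))))) := by
        conv_rhs => rw [map_sum, map_sum, LinearMap.sum_apply, map_sum, tmul_sum]
      rw [hpull, hS2sum j.1]
      simp only [map_smul, hϕone, LinearMap.smul_apply, honel, LinearEquiv.symm_apply_apply,
        tmul_smul, hαmul, LinearEquiv.apply_symm_apply, hφα']
      rw [← hαmul, LinearEquiv.symm_apply_apply]
    rw [hC1c]
    have e1 : ∀ x : H, (∑ l ∈ rH (Δ x), ∑ i ∈ rM (ρ m), act i.1 l.1 ⊗ₜ[k] mul i.2 (φ l.2))
        = (auxC2 mul act φ.toLinearMap (ρ m) ∘ₗ Δ) x := by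
      intro x
      conv_rhs => rw [LinearMap.comp_apply, rHs (Δ x), rMs (ρ m)]
      simp only [auxC2, map_sum, tmul_sum, sum_tmul, map_tmul, lift.tmul, LinearMap.coe_comp,
        Function.comp_apply, LinearMap.id_coe, id_eq, LinearEquiv.coe_coe,
        tensorTensorTensorComm_tmul, TensorProduct.mk_apply, LinearMap.sum_apply]
    simp only [e1]
    have e2 : (∑ j ∈ rH (Δ h), ε j.1 • (auxC2 mul act φ.toLinearMap (ρ m) ∘ₗ Δ) j.2)
        = (auxC2 mul act φ.toLinearMap (ρ m) ∘ₗ Δ) (α.symm h) := by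
      rw [← hεsum h, map_sum]
      simp only [map_smul]
    rw [e2, LinearMap.comp_apply, hΔα' h]
    conv_rhs => rw [rHs (Δ h), rMs (ρ m)]
    simp only [auxC2, map_sum, tmul_sum, sum_tmul, map_tmul, lift.tmul, LinearMap.coe_comp,
      Function.comp_apply, LinearMap.id_coe, id_eq, LinearEquiv.coe_coe,
      tensorTensorTensorComm_tmul, TensorProduct.mk_apply, LinearMap.sum_apply]
  · intro hB m h
    have hBnf : ∀ x : H,
        (∑ l ∈ rH (Δ x), ∑ i ∈ rM (ρ m),
            act i.1 (α.symm l.1) ⊗ₜ[k] mul i.2 (φ (α.symm l.2)))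
        = ∑ l ∈ rH (Δ x),
            (TensorProduct.map LinearMap.id
              (α.symm.toLinearMap ∘ₗ TensorProduct.lift mul ∘ₗ
                TensorProduct.map ϕ.toLinearMap LinearMap.id))
            ((TensorProduct.leftComm k H M H) (l.1 ⊗ₜ[k] ρ (act m l.2))) := by
      intro x
      have h0 := hB m x
      rw [rMs (ρ m), rHs (Δ x)] at h0
      simpa only [map_sum, tmul_sum, sum_tmul, map_tmul, lift.tmul, LinearMap.coe_comp,
        Function.comp_apply, LinearMap.id_coe, id_eq, LinearEquiv.coe_coe, leftComm_tmul,
        tensorTensorTensorComm_tmul, assoc_tmul] using h0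
    have hαone' : α.symm one = one := by
      have h0 := congrArg α.symm hαone
      rw [LinearEquiv.symm_apply_apply] at h0
      exact h0.symm
    have hARnf : (TensorProduct.map
          (TensorProduct.lift act ∘ₗ TensorProduct.map LinearMap.id α.toLinearMap)
          (TensorProduct.lift mul ∘ₗ
            TensorProduct.map (ϕ.toLinearMap ∘ₗ S)
              (TensorProduct.lift mul ∘ₗ TensorProduct.map α.symm.toLinearMap φ.toLinearMap)))
        ((TensorProduct.map LinearMap.id (TensorProduct.leftComm k H H H).toLinearMap)
          ((TensorProduct.tensorTensorTensorComm k M H H (H ⊗[k] H))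
            ((TensorProduct.map LinearMap.id (TensorProduct.leftComm k H H H).toLinearMap)
              (ρ m ⊗ₜ[k] (TensorProduct.map LinearMap.id Δ) (Δ h)))))
        = ∑ l ∈ rH (Δ h), ∑ i ∈ rM (ρ m), ∑ t ∈ rH (Δ l.2),
            act i.1 (α t.1) ⊗ₜ[k] mul (ϕ (S l.1)) (mul (α.symm i.2) (φ t.2)) := by
      conv_lhs => rw [rMs (ρ m), rHs (Δ h)]
      simp only [map_sum, tmul_sum, sum_tmul, map_tmul, lift.tmul, LinearMap.coe_comp,
        Function.comp_apply, LinearMap.id_coe, id_eq, LinearEquiv.coe_coe, leftComm_tmul,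
        tensorTensorTensorComm_tmul, assoc_tmul]
      refine Finset.sum_congr rfl fun l _ => Finset.sum_congr rfl fun i _ => ?_
      conv_lhs => rw [rHs (Δ l.2)]
      simp only [map_sum, tmul_sum, sum_tmul, map_tmul, lift.tmul, LinearMap.coe_comp,
        Function.comp_apply, LinearMap.id_coe, id_eq, LinearEquiv.coe_coe, leftComm_tmul,
        tensorTensorTensorComm_tmul, assoc_tmul]
    rw [hARnf]
    have hinj : ∀ u v : M ⊗[k] H,
        TensorProduct.map LinearMap.id α.toLinearMap u
          = TensorProduct.map LinearMap.id α.toLinearMap v → u = v := by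
      intro u v huv
      have h1 := congrArg (TensorProduct.map (LinearMap.id (R := k) (M := M)) α.symm.toLinearMap) huv
      rw [← LinearMap.comp_apply, ← TensorProduct.map_comp, ← LinearMap.comp_apply,
        ← TensorProduct.map_comp] at h1
      simpa using h1
    refine hinj _ _ ?_
    -- transform the RHS image
    have hRimg : TensorProduct.map LinearMap.id α.toLinearMap
          (∑ l ∈ rH (Δ h), ∑ i ∈ rM (ρ m), ∑ t ∈ rH (Δ l.2),
            act i.1 (α t.1) ⊗ₜ[k] mul (ϕ (S l.1)) (mul (α.symm i.2) (φ t.2)))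
        = ∑ l ∈ rH (Δ h), ∑ i ∈ rM (ρ m), ∑ t ∈ rH (Δ l.2),
            act i.1 (α t.1) ⊗ₜ[k] mul (ϕ (S (α l.1))) (mul i.2 (φ (α t.2))) := by
      simp only [map_sum, map_tmul, LinearMap.id_coe, id_eq, LinearEquiv.coe_coe, hαmul,
        LinearEquiv.apply_symm_apply, ← hϕα, ← hSα, ← hφα]
    rw [hRimg]
    -- the two key computations
    have hLR : ∀ x : H,
        auxC6 mul act (ϕ.toLinearMap ∘ₗ S ∘ₗ α.symm.toLinearMap) α.symm.toLinearMap
            φ.toLinearMap (ρ m) ((TensorProduct.map LinearMap.id Δ) (Δ x))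
        = auxC3 mul (ϕ.toLinearMap ∘ₗ S ∘ₗ α.symm.toLinearMap) α.symm.toLinearMap
            ϕ.toLinearMap (ρ ∘ₗ act m) ((TensorProduct.map LinearMap.id Δ) (Δ x)) := by
      intro x
      rw [rHs (Δ x)]
      simp only [map_sum, map_tmul, LinearMap.id_coe, id_eq]
      refine Finset.sum_congr rfl fun j _ => ?_
      have h0 := congrArg
        (TensorProduct.map (LinearMap.id (R := k) (M := M)) (mul (ϕ (S (α.symm j.1)))))
        (hBnf j.2)
      simp only [map_sum, map_tmul, LinearMap.id_coe, id_eq] at h0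
      have hL6 : auxC6 mul act (ϕ.toLinearMap ∘ₗ S ∘ₗ α.symm.toLinearMap) α.symm.toLinearMap
            φ.toLinearMap (ρ m) (j.1 ⊗ₜ[k] Δ j.2)
          = ∑ l ∈ rH (Δ j.2), ∑ i ∈ rM (ρ m),
              act i.1 (α.symm l.1) ⊗ₜ[k]
                mul (ϕ (S (α.symm j.1))) (mul i.2 (φ (α.symm l.2))) := by
        conv_lhs => rw [rHs (Δ j.2), rMs (ρ m)]
        simp only [auxC6, map_sum, tmul_sum, sum_tmul, map_tmul, lift.tmul, LinearMap.coe_comp,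
          Function.comp_apply, LinearMap.id_coe, id_eq, LinearEquiv.coe_coe, leftComm_tmul,
          tensorTensorTensorComm_tmul, TensorProduct.mk_apply, LinearMap.sum_apply]
      have hR3 : auxC3 mul (ϕ.toLinearMap ∘ₗ S ∘ₗ α.symm.toLinearMap) α.symm.toLinearMap
            ϕ.toLinearMap (ρ ∘ₗ act m) (j.1 ⊗ₜ[k] Δ j.2)
          = ∑ l ∈ rH (Δ j.2),
              TensorProduct.map LinearMap.id (mul (ϕ (S (α.symm j.1))))
                ((TensorProduct.map LinearMap.id
                    (α.symm.toLinearMap ∘ₗ TensorProduct.lift mul ∘ₗ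
                      TensorProduct.map ϕ.toLinearMap LinearMap.id))
                  ((TensorProduct.leftComm k H M H) (l.1 ⊗ₜ[k] ρ (act m l.2)))) := by
        conv_lhs => rw [rHs (Δ j.2)]
        simp only [auxC3, map_sum, tmul_sum, map_tmul, LinearMap.coe_comp, Function.comp_apply,
          LinearMap.id_coe, id_eq, LinearEquiv.coe_coe, LinearMap.sum_apply]
        refine Finset.sum_congr rfl fun l _ => ?_
        rw [rMs (ρ (act m l.2))]
        simp only [map_sum, tmul_sum, sum_tmul, map_tmul, lift.tmul, LinearMap.coe_comp,
          Function.comp_apply, LinearMap.id_coe, id_eq, LinearEquiv.coe_coe, leftComm_tmul]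
      rw [hL6, h0, hR3]
    have hmid : ∀ x : H,
        auxC3 mul (ϕ.toLinearMap ∘ₗ S ∘ₗ α.symm.toLinearMap) α.symm.toLinearMap
            ϕ.toLinearMap (ρ ∘ₗ act m) ((TensorProduct.map LinearMap.id Δ) (Δ x))
        = TensorProduct.map LinearMap.id α.toLinearMap
            (ρ (act m (α.symm (α.symm x)))) := by
      intro x
      have hE2 : (TensorProduct.map LinearMap.id Δ) (Δ x)
          = (TensorProduct.map α.toLinearMap LinearMap.id)
              ((TensorProduct.assoc k H H H)
                ((TensorProduct.map Δ α.symm.toLinearMap) (Δ x))) := by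
        have h0 := congrArg (TensorProduct.map α.toLinearMap (LinearMap.id (R := k) (M := H ⊗[k] H))) (hco x)
        rw [← LinearMap.comp_apply, ← TensorProduct.map_comp] at h0
        simpa using h0
      rw [hE2]
      conv_lhs => rw [rHs (Δ x)]
      simp only [map_sum]
      have hstep : ∀ j : H × H,
          auxC3 mul (ϕ.toLinearMap ∘ₗ S ∘ₗ α.symm.toLinearMap) α.symm.toLinearMap
              ϕ.toLinearMap (ρ ∘ₗ act m)
              ((TensorProduct.map α.toLinearMap LinearMap.id)
                ((TensorProduct.assoc k H H H)
                  ((TensorProduct.map Δ α.symm.toLinearMap) (j.1 ⊗ₜ[k] j.2))))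
          = ε j.1 • TensorProduct.map LinearMap.id α.toLinearMap
              (ρ (act m (α.symm j.2))) := by
        intro j
        simp only [map_tmul, LinearMap.id_coe, id_eq, LinearEquiv.coe_coe]
        conv_lhs => rw [rHs (Δ j.1)]
        simp only [sum_tmul, map_sum, assoc_tmul, map_tmul, LinearMap.id_coe, id_eq,
          LinearEquiv.coe_coe, LinearMap.sum_apply]
        have hev : ∀ r : H × H,
            auxC3 mul (ϕ.toLinearMap ∘ₗ S ∘ₗ α.symm.toLinearMap) α.symm.toLinearMap
                ϕ.toLinearMap (ρ ∘ₗ act m) (α r.1 ⊗ₜ[k] (r.2 ⊗ₜ[k] α.symm j.2))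
            = ∑ n ∈ rM (ρ (act m (α.symm j.2))),
                n.1 ⊗ₜ[k] mul (ϕ (S r.1)) (α.symm (mul (ϕ r.2) n.2)) := by
          intro r
          simp only [auxC3, LinearMap.coe_comp, Function.comp_apply, LinearEquiv.coe_coe,
            map_tmul, LinearMap.id_coe, id_eq]
          conv_lhs => rw [rMs (ρ (act m (α.symm j.2)))]
          simp only [map_sum, tmul_sum, sum_tmul, map_tmul, lift.tmul, LinearMap.coe_comp,
            Function.comp_apply, LinearMap.id_coe, id_eq, LinearEquiv.coe_coe, leftComm_tmul,
            LinearEquiv.symm_apply_apply]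
        simp only [hev]
        have hterm : ∀ (a b w : H),
            mul (ϕ (S a)) (α.symm (mul (ϕ b) w)) = mul (ϕ (α.symm (mul (S a) b))) w := by
          intro a b w
          conv_lhs => rw [hαmul', ← hϕα' b,
            show ϕ (S a) = α (ϕ (α.symm (S a))) from by rw [hϕα', LinearEquiv.apply_symm_apply],
            hassoc, ← hϕmul, LinearEquiv.apply_symm_apply]
          rw [hαmul']
        simp only [hterm]
        rw [Finset.sum_comm]
        have hpull : ∀ n : M × H,
            (∑ r ∈ rH (Δ j.1), n.1 ⊗ₜ[k] mul (ϕ (α.symm (mul (S r.1) r.2))) n.2)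
            = n.1 ⊗ₜ[k] mul (ϕ (α.symm (∑ r ∈ rH (Δ j.1), mul (S r.1) r.2))) n.2 := by
          intro n
          conv_rhs => rw [map_sum, map_sum, map_sum, LinearMap.sum_apply, tmul_sum]
        simp only [hpull, hS1sum j.1, map_smul, hαone', hϕone, LinearMap.smul_apply, honel,
          tmul_smul]
        rw [← Finset.smul_sum]
        congr 1
        conv_rhs => rw [rMs (ρ (act m (α.symm j.2)))]
        simp only [map_sum, map_tmul, LinearMap.id_coe, id_eq, LinearEquiv.coe_coe]
      simp only [hstep]
      rw [← hεsum x]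
      simp only [map_sum, map_smul, Finset.smul_sum]
    have hfin := (hLR (α (α h))).trans (hmid (α (α h)))
    rw [LinearEquiv.symm_apply_apply, LinearEquiv.symm_apply_apply] at hfin
    rw [← hfin, hΔα (α h), hΔα h]
    conv_lhs => rw [rHs (Δ h)]
    simp only [map_sum, map_tmul, LinearMap.id_coe, id_eq, LinearEquiv.coe_coe]
    refine Finset.sum_congr rfl fun j _ => ?_
    rw [Finset.sum_comm]
    rw [hΔα (α j.2), hΔα j.2]
    conv_lhs => rw [rHs (Δ j.2), rMs (ρ m)]
    simp only [auxC6, map_sum, tmul_sum, sum_tmul, map_tmul, lift.tmul, LinearMap.coe_comp,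
      Function.comp_apply, LinearMap.id_coe, id_eq, LinearEquiv.coe_coe, leftComm_tmul,
      tensorTensorTensorComm_tmul, TensorProduct.mk_apply, LinearMap.sum_apply,
      LinearEquiv.symm_apply_apply]


end HomPaper
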